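/- arXiv:1506.07481 — 5 statements merged into one kernel-verified Lean document; each statement's English description precedes it below -/
import Mathlib

section
/- Let U ⊆ ℝ⁴ be open and let F = f₀ + f₁·i + f₂·j + f₃·ij : U → Cl(1,1) have C² components satisfying the right Cl(1,1)-differentiability system on U: ∂₀f₀ = ∂₁f₁ = ∂₂f₂ = ∂₃f₃; ∂₀f₁ = −∂₁f₀ = ∂₂f₃ = −∂₃f₂; ∂₀f₂ = −∂₁f₃ = ∂₂f₀ = −∂₃f₁; ∂₀f₃ = ∂₁f₂ = ∂₂f₁ = ∂₃f₀. Then each component fₗ is ultra-hyperbolic on U, i.e., Δ₍₂,₂₎fₗ = 0 on U. -/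
open Filter Topology Quaternion

noncomputable section

abbrev SQ : Type := ℍ[ℝ, -1, 1]

def qi : SQ := ⟨0, 1, 0, 0⟩
def qj : SQ := ⟨0, 0, 1, 0⟩
def qk : SQ := ⟨0, 0, 0, 1⟩

/-- Partial derivative of a real-valued function on `Fin n → ℝ` in the `l`-th
coordinate direction. -/
def pd {n : ℕ} (l : Fin n) (f : (Fin n → ℝ) → ℝ) (x : Fin n → ℝ) : ℝ :=
  fderiv ℝ f x (Pi.single l 1)

/-- Componentwise partial derivative of a split-quaternion-valued function. -/
def pdQ {n : ℕ} (l : Fin n) (F : (Fin n → ℝ) → SQ) (x : Fin n → ℝ) : SQ :=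
  ⟨pd l (fun y => (F y).re) x, pd l (fun y => (F y).imI) x,
   pd l (fun y => (F y).imJ) x, pd l (fun y => (F y).imK) x⟩

/-- The operator `∂̄` applied on the left. -/
def dbar (F : (Fin 4 → ℝ) → SQ) (x : Fin 4 → ℝ) : SQ :=
  pdQ 0 F x + qi * pdQ 1 F x - qj * pdQ 2 F x - qk * pdQ 3 F x

/-- The operator `∂̄` applied on the right. -/
def dbarR (F : (Fin 4 → ℝ) → SQ) (x : Fin 4 → ℝ) : SQ :=
  pdQ 0 F x + pdQ 1 F x * qi - pdQ 2 F x * qj - pdQ 3 F x * qk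

/-- The operator `∂` applied on the left. -/
def del (F : (Fin 4 → ℝ) → SQ) (x : Fin 4 → ℝ) : SQ :=
  pdQ 0 F x - qi * pdQ 1 F x + qj * pdQ 2 F x + qk * pdQ 3 F x

/-- The operator `∂` applied on the right. -/
def delR (F : (Fin 4 → ℝ) → SQ) (x : Fin 4 → ℝ) : SQ :=
  pdQ 0 F x - pdQ 1 F x * qi + pdQ 2 F x * qj + pdQ 3 F x * qk

/-- The identification of `ℝ⁴` with the split-quaternions. -/
def toQ (x : Fin 4 → ℝ) : SQ := ⟨x 0, x 1, x 2, x 3⟩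

/-- The identification of the split-quaternions with `ℝ⁴`. -/
def toT (Z : SQ) : Fin 4 → ℝ := ![Z.re, Z.imI, Z.imJ, Z.imK]

/-- The ultrahyperbolic operator `Δ₍₂,₂₎` on `ℝ^{2,2}`. -/
def box (f : (Fin 4 → ℝ) → ℝ) (x : Fin 4 → ℝ) : ℝ :=
  pd 0 (pd 0 f) x + pd 1 (pd 1 f) x - pd 2 (pd 2 f) x - pd 3 (pd 3 f) x

/-!
Regrouping the system, each component `f` has a partner `g` (`f₁` for `f₀`, `-f₀` for `f₁`,
`-f₃` for `f₂`, `f₂` for `f₃`) such that `f + i g` is holomorphic in `x₀ + i x₁` and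
antiholomorphic in `x₂ + i x₃`. Substituting these first-order relations into `Δ₍₂,₂₎ f` leaves
commutators `∂ₖ∂ₗ g - ∂ₗ∂ₖ g`, which vanish by the symmetry of second derivatives of `g`.
-/

section PartialDerivatives

variable {n : ℕ} {f g : (Fin n → ℝ) → ℝ} {x : Fin n → ℝ}

lemma pd_neg (l : Fin n) : pd l (-f) x = -pd l f x := by
  simp [pd, fderiv_neg]

lemma pd_congr_of_eqOn {U : Set (Fin n → ℝ)} (hU : IsOpen U) (h : Set.EqOn f g U) (hx : x ∈ U)
    (l : Fin n) : pd l f x = pd l g x := by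
  rw [pd, pd, (Filter.eventuallyEq_of_mem (hU.mem_nhds hx) h).fderiv_eq]

lemma pd_pd_comm (hf : ContDiffAt ℝ 2 f x) (i j : Fin n) :
    pd i (pd j f) x = pd j (pd i f) x := by
  have hdiff : DifferentiableAt ℝ (fderiv ℝ f) x :=
    (hf.fderiv_right (m := 1) le_rfl).differentiableAt one_ne_zero
  have hsnd : ∀ a b : Fin n,
      pd a (pd b f) x = fderiv ℝ (fderiv ℝ f) x (Pi.single a 1) (Pi.single b 1) := by
    intro a b
    change fderiv ℝ (fun y => fderiv ℝ f y (Pi.single b 1)) x (Pi.single a 1) = _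
    rw [fderiv_clm_apply hdiff (differentiableAt_const _)]
    simp
  rw [hsnd, hsnd, (hf.isSymmSndFDerivAt (by simp)).eq]

end PartialDerivatives

/-- `f + i g` is holomorphic in `x₀ + i x₁` and antiholomorphic in `x₂ + i x₃` on `U`. -/
def CauchyRiemannPairOn (U : Set (Fin 4 → ℝ)) (f g : (Fin 4 → ℝ) → ℝ) : Prop :=
  ∀ x ∈ U, pd 0 f x = pd 1 g x ∧ pd 1 f x = -pd 0 g x ∧
    pd 2 f x = -pd 3 g x ∧ pd 3 f x = pd 2 g x

namespace CauchyRiemannPairOn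

variable {U : Set (Fin 4 → ℝ)} {f g : (Fin 4 → ℝ) → ℝ}

lemma rotate (h : CauchyRiemannPairOn U f g) : CauchyRiemannPairOn U g (-f) := by
  intro x hx
  obtain ⟨e₀, e₁, e₂, e₃⟩ := h x hx
  simp only [pd_neg]
  exact ⟨by linarith, by linarith, by linarith, by linarith⟩

lemma box_eq_zero (hU : IsOpen U) (hg : ContDiffOn ℝ 2 g U) (h : CauchyRiemannPairOn U f g)
    {x : Fin 4 → ℝ} (hx : x ∈ U) : box f x = 0 := by
  have hpd (k l : Fin 4) {φ : (Fin 4 → ℝ) → ℝ} (hφ : ∀ y ∈ U, pd l f y = φ y) :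
      pd k (pd l f) x = pd k φ x :=
    pd_congr_of_eqOn hU hφ hx k
  have h₀ := hpd 0 0 fun y hy => (h y hy).1
  have h₁ := hpd 1 1 (φ := -pd 0 g) fun y hy => (h y hy).2.1
  have h₂ := hpd 2 2 (φ := -pd 3 g) fun y hy => (h y hy).2.2.1
  have h₃ := hpd 3 3 fun y hy => (h y hy).2.2.2
  have hsymm := pd_pd_comm (hg.contDiffAt (hU.mem_nhds hx))
  rw [box, h₀, h₁, h₂, h₃, pd_neg, pd_neg, hsymm 0 1, hsymm 2 3]
  ring

end CauchyRiemannPairOn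

/-- components of a function with C² components satisfying the right
Cl(1,1)-differentiability system on an open set `U` are ultra-hyperbolic on `U`. -/
theorem rightDiffSystem_ultrahyperbolic (U : Set (Fin 4 → ℝ)) (hU : IsOpen U)
    (f₀ f₁ f₂ f₃ : (Fin 4 → ℝ) → ℝ)
    (h₀ : ContDiffOn ℝ 2 f₀ U) (h₁ : ContDiffOn ℝ 2 f₁ U)
    (h₂ : ContDiffOn ℝ 2 f₂ U) (h₃ : ContDiffOn ℝ 2 f₃ U)
    (hsys : ∀ x ∈ U,
      (pd 0 f₀ x = pd 1 f₁ x ∧ pd 1 f₁ x = pd 2 f₂ x ∧ pd 2 f₂ x = pd 3 f₃ x) ∧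
      (pd 0 f₁ x = -pd 1 f₀ x ∧ -pd 1 f₀ x = pd 2 f₃ x ∧ pd 2 f₃ x = -pd 3 f₂ x) ∧
      (pd 0 f₂ x = -pd 1 f₃ x ∧ -pd 1 f₃ x = pd 2 f₀ x ∧ pd 2 f₀ x = -pd 3 f₁ x) ∧
      (pd 0 f₃ x = pd 1 f₂ x ∧ pd 1 f₂ x = pd 2 f₁ x ∧ pd 2 f₁ x = pd 3 f₀ x)) :
    ∀ x ∈ U, box f₀ x = 0 ∧ box f₁ x = 0 ∧ box f₂ x = 0 ∧ box f₃ x = 0 := by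
  have hf₀ : CauchyRiemannPairOn U f₀ f₁ := fun x hx => by
    obtain ⟨⟨e₀, -, -⟩, ⟨e₁, -, -⟩, ⟨-, -, e₂⟩, ⟨-, -, e₃⟩⟩ := hsys x hx
    exact ⟨e₀, by linarith, e₂, e₃.symm⟩
  have hf₃ : CauchyRiemannPairOn U f₃ f₂ := fun x hx => by
    obtain ⟨⟨-, -, e₂⟩, ⟨-, -, e₁⟩, ⟨e₀, -, -⟩, ⟨e₃, -, -⟩⟩ := hsys x hx
    exact ⟨e₃, by linarith, e₁, e₂.symm⟩
  intro x hx
  exact ⟨hf₀.box_eq_zero hU h₁ hx, hf₀.rotate.box_eq_zero hU h₀.neg hx,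
    hf₃.rotate.box_eq_zero hU h₃.neg hx, hf₃.box_eq_zero hU h₂ hx⟩

end
end

section
/- Let U ⊆ ℝ⁴ be open and let F = f₀ + f₁·i + f₂·j + f₃·ij : U → Cl(1,1) have C² components satisfying the left Cl(1,1)-differentiability system on U: ∂₀f₀ = ∂₁f₁ = ∂₂f₂ = ∂₃f₃; ∂₀f₁ = −∂₁f₀ = −∂₂f₃ = ∂₃f₂; ∂₀f₂ = ∂₁f₃ = ∂₂f₀ = ∂₃f₁; ∂₀f₃ = −∂₁f₂ = −∂₂f₁ = ∂₃f₀. Then each component fₗ is ultra-hyperbolic on U, i.e., Δ₍₂,₂₎fₗ = 0 on U. -/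
open Filter Topology Quaternion

noncomputable section

/-!
The system splits into Cauchy–Riemann equations for the pairs `(f₀, f₁)` and `(f₂, f₃)`, both in
the `(x₀, x₁)`-plane and in the `(x₂, x₃)`-plane. As for holomorphic functions, the symmetry of
second derivatives then makes every component harmonic in each of the two planes separately, and
`Δ₍₂,₂₎` is the difference of these two planar Laplacians.
-/

namespace SplitQuaternionAnalysis

variable {n : ℕ}

lemma pd_congr_of_eventuallyEq {g h : (Fin n → ℝ) → ℝ} {x : Fin n → ℝ} (he : g =ᶠ[𝓝 x] h)
    (l : Fin n) : pd l g x = pd l h x := by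
  rw [pd, pd, he.fderiv_eq]

lemma pd_neg (l : Fin n) (g : (Fin n → ℝ) → ℝ) (x : Fin n → ℝ) :
    pd l (fun y => -g y) x = -pd l g x := by
  simp only [pd, fderiv_fun_neg, neg_apply]

lemma pd_comm {f : (Fin n → ℝ) → ℝ} {x : Fin n → ℝ} (hf : ContDiffAt ℝ 2 f x) (a b : Fin n) :
    pd a (pd b f) x = pd b (pd a f) x := by
  have hd : DifferentiableAt ℝ (fderiv ℝ f) x :=
    (hf.fderiv_right (m := 1) le_rfl).differentiableAt one_ne_zero
  have hsymm := hf.isSymmSndFDerivAt (by simp [minSmoothness_of_isRCLikeNormedField])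
  have hpd : ∀ v w : Fin n → ℝ,
      fderiv ℝ (fun y => fderiv ℝ f y v) x w = fderiv ℝ (fderiv ℝ f) x w v := by
    intro v w
    rw [fderiv_clm_apply hd (differentiableAt_const v)]
    simp
  unfold pd
  rw [hpd, hpd, hsymm]

def CauchyRiemannNear (a b : Fin n) (u v : (Fin n → ℝ) → ℝ) (x : Fin n → ℝ) : Prop :=
  ∀ᶠ y in 𝓝 x, pd a u y = pd b v y ∧ pd b u y = -pd a v y

def planeLaplacian (a b : Fin n) (f : (Fin n → ℝ) → ℝ) (x : Fin n → ℝ) : ℝ :=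
  pd a (pd a f) x + pd b (pd b f) x

lemma box_eq_planeLaplacian_sub (f : (Fin 4 → ℝ) → ℝ) (x : Fin 4 → ℝ) :
    box f x = planeLaplacian 0 1 f x - planeLaplacian 2 3 f x := by
  rw [box, planeLaplacian, planeLaplacian]
  ring

namespace CauchyRiemannNear

variable {a b : Fin n} {u v : (Fin n → ℝ) → ℝ} {x : Fin n → ℝ}

lemma swap (h : CauchyRiemannNear a b u v x) : CauchyRiemannNear a b v (fun y => -u y) x := by
  filter_upwards [h] with y ⟨hab, hba⟩
  rw [pd_neg, pd_neg]
  constructor <;> linarith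

lemma planeLaplacian_eq_zero (h : CauchyRiemannNear a b u v x) (hv : ContDiffAt ℝ 2 v x) :
    planeLaplacian a b u x = 0 := by
  have hau : pd a u =ᶠ[𝓝 x] pd b v := h.mono fun _ hy => hy.1
  have hbu : pd b u =ᶠ[𝓝 x] fun y => -pd a v y := h.mono fun _ hy => hy.2
  rw [planeLaplacian, pd_congr_of_eventuallyEq hau, pd_congr_of_eventuallyEq hbu, pd_neg,
    pd_comm hv a b, add_neg_cancel]

lemma planeLaplacian_eq_zero_right (h : CauchyRiemannNear a b u v x) (hu : ContDiffAt ℝ 2 u x) :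
    planeLaplacian a b v x = 0 :=
  h.swap.planeLaplacian_eq_zero hu.neg

end CauchyRiemannNear

lemma box_eq_zero_of_cauchyRiemannNear {u v : (Fin 4 → ℝ) → ℝ} {x : Fin 4 → ℝ}
    (h₀₁ : CauchyRiemannNear 0 1 u v x) (h₂₃ : CauchyRiemannNear 2 3 u v x)
    (hu : ContDiffAt ℝ 2 u x) (hv : ContDiffAt ℝ 2 v x) : box u x = 0 ∧ box v x = 0 := by
  rw [box_eq_planeLaplacian_sub, box_eq_planeLaplacian_sub, h₀₁.planeLaplacian_eq_zero hv,
    h₂₃.planeLaplacian_eq_zero hv, h₀₁.planeLaplacian_eq_zero_right hu,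
    h₂₃.planeLaplacian_eq_zero_right hu]
  norm_num

end SplitQuaternionAnalysis

open SplitQuaternionAnalysis

/-- components of a function with C² components satisfying the left
Cl(1,1)-differentiability system on an open set `U` are ultra-hyperbolic on `U`. -/
theorem leftDiffSystem_ultrahyperbolic (U : Set (Fin 4 → ℝ)) (hU : IsOpen U)
    (f₀ f₁ f₂ f₃ : (Fin 4 → ℝ) → ℝ)
    (h₀ : ContDiffOn ℝ 2 f₀ U) (h₁ : ContDiffOn ℝ 2 f₁ U)
    (h₂ : ContDiffOn ℝ 2 f₂ U) (h₃ : ContDiffOn ℝ 2 f₃ U)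
    (hsys : ∀ x ∈ U,
      (pd 0 f₀ x = pd 1 f₁ x ∧ pd 1 f₁ x = pd 2 f₂ x ∧ pd 2 f₂ x = pd 3 f₃ x) ∧
      (pd 0 f₁ x = -pd 1 f₀ x ∧ -pd 1 f₀ x = -pd 2 f₃ x ∧ -pd 2 f₃ x = pd 3 f₂ x) ∧
      (pd 0 f₂ x = pd 1 f₃ x ∧ pd 1 f₃ x = pd 2 f₀ x ∧ pd 2 f₀ x = pd 3 f₁ x) ∧
      (pd 0 f₃ x = -pd 1 f₂ x ∧ -pd 1 f₂ x = -pd 2 f₁ x ∧ -pd 2 f₁ x = pd 3 f₀ x)) :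
    ∀ x ∈ U, box f₀ x = 0 ∧ box f₁ x = 0 ∧ box f₂ x = 0 ∧ box f₃ x = 0 := by
  intro x hx
  have hUx : U ∈ 𝓝 x := hU.mem_nhds hx
  have hcr : CauchyRiemannNear 0 1 f₀ f₁ x ∧ CauchyRiemannNear 2 3 f₀ f₁ x ∧
      CauchyRiemannNear 0 1 f₂ f₃ x ∧ CauchyRiemannNear 2 3 f₂ f₃ x := by
    refine ⟨?_, ?_, ?_, ?_⟩ <;>
    · filter_upwards [hUx] with y hy
      obtain ⟨⟨_, _, _⟩, ⟨_, _, _⟩, ⟨_, _, _⟩, ⟨_, _, _⟩⟩ := hsys y hy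
      constructor <;> linarith
  obtain ⟨hbox₀, hbox₁⟩ := box_eq_zero_of_cauchyRiemannNear hcr.1 hcr.2.1
    ((h₀ x hx).contDiffAt hUx) ((h₁ x hx).contDiffAt hUx)
  obtain ⟨hbox₂, hbox₃⟩ := box_eq_zero_of_cauchyRiemannNear hcr.2.2.1 hcr.2.2.2
    ((h₂ x hx).contDiffAt hUx) ((h₃ x hx).contDiffAt hUx)
  exact ⟨hbox₀, hbox₁, hbox₂, hbox₃⟩

end
end

section
/- Let U ⊆ ℝ⁴ be open and let F : U → Cl(1,1) have C² components. If F satisfies at least one of the equations ∂̄F = 0, F∂̄ = 0, ∂F = 0, or F∂ = 0 on U, then each of the four real components of F is ultra-hyperbolic on U, i.e., satisfies John's equation Δ₍₂,₂₎u = 0 on U. -/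
/-!
Each of the four operators factors the ultra-hyperbolic operator: `∂ ∂̄ = ∂̄ ∂ = Δ₍₂,₂₎`
componentwise, and likewise for the operators acting on the right. Writing them as
`∑ₗ Aₗ ∂ₗ`, the composition is `∑ₘ ∑ₗ Bₘ Aₗ ∂ₘ ∂ₗ`; mixed partials of a C² function commute,
and the cross terms cancel because `i`, `j`, `ij` anticommute, while the squares
`i² = -1`, `j² = (ij)² = 1` produce the signature `(2, 2)`. So if `∂̄F = 0` on the open set `U`,
then `Δ₍₂,₂₎F = ∂(∂̄F) = 0` there.
-/

open Filter Topology Quaternion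

noncomputable section

section PartialDerivative

variable {n : ℕ} {U : Set (Fin n → ℝ)} {f g : (Fin n → ℝ) → ℝ} {x : Fin n → ℝ}

theorem pd_add (hf : DifferentiableAt ℝ f x) (hg : DifferentiableAt ℝ g x) (l : Fin n) :
    pd l (fun y => f y + g y) x = pd l f x + pd l g x := by
  rw [pd, fderiv_fun_add hf hg]
  rfl

theorem pd_mul_const (hf : DifferentiableAt ℝ f x) (c : ℝ) (l : Fin n) :
    pd l (fun y => f y * c) x = pd l f x * c := by
  rw [pd, fderiv_mul_const hf]
  simp [pd, mul_comm]

theorem pd_sum {ι : Type*} {s : Finset ι} {f : ι → (Fin n → ℝ) → ℝ}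
    (hf : ∀ i ∈ s, DifferentiableAt ℝ (f i) x) (l : Fin n) :
    pd l (fun y => ∑ i ∈ s, f i y) x = ∑ i ∈ s, pd l (f i) x := by
  simp [pd, (HasFDerivAt.fun_sum fun i hi => (hf i hi).hasFDerivAt).fderiv]

theorem pd_eq_zero_of_eventuallyEq_zero (hf : f =ᶠ[𝓝 x] 0) (l : Fin n) : pd l f x = 0 := by
  simp [pd, hf.fderiv_eq]

theorem differentiableAt_pd (hU : IsOpen U) (hf : ContDiffOn ℝ 2 f U) (hx : x ∈ U) (l : Fin n) :
    DifferentiableAt ℝ (pd l f) x := by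
  have h : ContDiffAt ℝ 1 (fderiv ℝ f) x :=
    (hf.contDiffAt (hU.mem_nhds hx)).fderiv_right (by norm_num)
  exact (h.differentiableAt one_ne_zero).clm_apply (differentiableAt_const _)

theorem pd_comm (hU : IsOpen U) (hf : ContDiffOn ℝ 2 f U) (hx : x ∈ U) (l m : Fin n) :
    pd l (pd m f) x = pd m (pd l f) x := by
  have hdf : DifferentiableAt ℝ (fderiv ℝ f) x :=
    ((hf.contDiffAt (hU.mem_nhds hx)).fderiv_right (m := 1) (by norm_num)).differentiableAt
      one_ne_zero
  have hf' : ∀ᶠ y in 𝓝 x, HasFDerivAt f (fderiv ℝ f y) y := by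
    filter_upwards [hU.mem_nhds hx] with y hy
    exact ((hf.differentiableOn (by norm_num) y hy).differentiableAt (hU.mem_nhds hy)).hasFDerivAt
  have hsecond : ∀ a b : Fin n,
      pd a (pd b f) x = fderiv ℝ (fderiv ℝ f) x (Pi.single a 1) (Pi.single b 1) := by
    intro a b
    change fderiv ℝ (fun y => fderiv ℝ f y (Pi.single b 1)) x (Pi.single a 1) = _
    simp [fderiv_clm_apply hdf (differentiableAt_const _)]
  rw [hsecond, hsecond, second_derivative_symmetric_of_eventually hf' hdf.hasFDerivAt]

end PartialDerivative

theorem linearMap_apply_eq_components (φ : SQ →ₗ[ℝ] ℝ) (Z : SQ) :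
    φ Z = Z.re * φ 1 + Z.imI * φ qi + Z.imJ * φ qj + Z.imK * φ qk := by
  have hZ : Z = Z.re • 1 + Z.imI • qi + Z.imJ • qj + Z.imK • qk := by
    ext <;> simp [qi, qj, qk]
  conv_lhs => rw [hZ]
  simp

/-- Quantifying over real-linear functionals instead of the four components makes this
stable under linear maps and finite sums. -/
def SQDifferentiableAt {n : ℕ} (F : (Fin n → ℝ) → SQ) (x : Fin n → ℝ) : Prop :=
  ∀ φ : SQ →ₗ[ℝ] ℝ, DifferentiableAt ℝ (fun y => φ (F y)) x

section SQDerivative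

open QuaternionAlgebra

variable {n : ℕ} {U : Set (Fin n → ℝ)} {F G : (Fin n → ℝ) → SQ} {x : Fin n → ℝ}

theorem sqDifferentiableAt_of_components (h₀ : DifferentiableAt ℝ (fun y => (F y).re) x)
    (h₁ : DifferentiableAt ℝ (fun y => (F y).imI) x)
    (h₂ : DifferentiableAt ℝ (fun y => (F y).imJ) x)
    (h₃ : DifferentiableAt ℝ (fun y => (F y).imK) x) : SQDifferentiableAt F x := fun φ => by
  simp only [linearMap_apply_eq_components φ (F _)]
  fun_prop

theorem pd_linearMap_comp (hF : SQDifferentiableAt F x) (φ : SQ →ₗ[ℝ] ℝ) (l : Fin n) :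
    pd l (fun y => φ (F y)) x = φ (pdQ l F x) := by
  have h₀ : DifferentiableAt ℝ (fun y => (F y).re) x := hF (reₗ _ _ _)
  have h₁ : DifferentiableAt ℝ (fun y => (F y).imI) x := hF (imIₗ _ _ _)
  have h₂ : DifferentiableAt ℝ (fun y => (F y).imJ) x := hF (imJₗ _ _ _)
  have h₃ : DifferentiableAt ℝ (fun y => (F y).imK) x := hF (imKₗ _ _ _)
  simp only [linearMap_apply_eq_components φ (F _), linearMap_apply_eq_components φ (pdQ l F x)]
  rw [pd_add (by fun_prop) (by fun_prop), pd_add (by fun_prop) (by fun_prop),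
    pd_add (by fun_prop) (by fun_prop), pd_mul_const h₀, pd_mul_const h₁, pd_mul_const h₂,
    pd_mul_const h₃]
  rfl

theorem pdQ_eq_of_forall_pd {l : Fin n} {Z : SQ}
    (h : ∀ φ : SQ →ₗ[ℝ] ℝ, pd l (fun y => φ (G y)) x = φ Z) : pdQ l G x = Z := by
  ext
  exacts [h (reₗ _ _ _), h (imIₗ _ _ _), h (imJₗ _ _ _), h (imKₗ _ _ _)]

theorem pdQ_sum_linearMap {ι : Type*} (s : Finset ι) (A : ι → SQ →ₗ[ℝ] SQ)
    {H : ι → (Fin n → ℝ) → SQ} (hH : ∀ i, SQDifferentiableAt (H i) x) (l : Fin n) :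
    pdQ l (fun y => ∑ i ∈ s, A i (H i y)) x = ∑ i ∈ s, A i (pdQ l (H i) x) :=
  pdQ_eq_of_forall_pd fun φ => by
    simp only [map_sum, ← LinearMap.comp_apply]
    rw [pd_sum fun i _ => hH i (φ ∘ₗ A i)]
    exact Finset.sum_congr rfl fun i _ => pd_linearMap_comp (hH i) _ l

theorem pdQ_eq_zero_of_eqOn_zero (hU : IsOpen U) (hG : ∀ y ∈ U, G y = 0) (hx : x ∈ U)
    (l : Fin n) : pdQ l G x = 0 :=
  pdQ_eq_of_forall_pd fun φ => by
    rw [map_zero]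
    refine pd_eq_zero_of_eventuallyEq_zero ?_ l
    filter_upwards [hU.mem_nhds hx] with y hy
    simp [hG y hy]

theorem sqDifferentiableAt_pdQ (hU : IsOpen U)
    (hF : ∀ φ : SQ →ₗ[ℝ] ℝ, ContDiffOn ℝ 2 (fun y => φ (F y)) U) (hx : x ∈ U) (l : Fin n) :
    SQDifferentiableAt (pdQ l F) x :=
  sqDifferentiableAt_of_components (differentiableAt_pd hU (hF (reₗ _ _ _)) hx l)
    (differentiableAt_pd hU (hF (imIₗ _ _ _)) hx l)
    (differentiableAt_pd hU (hF (imJₗ _ _ _)) hx l)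
    (differentiableAt_pd hU (hF (imKₗ _ _ _)) hx l)

theorem pdQ_comm (hU : IsOpen U)
    (hF : ∀ φ : SQ →ₗ[ℝ] ℝ, ContDiffOn ℝ 2 (fun y => φ (F y)) U) (hx : x ∈ U) (l m : Fin n) :
    pdQ l (pdQ m F) x = pdQ m (pdQ l F) x := by
  ext
  exacts [pd_comm hU (hF (reₗ _ _ _)) hx l m,
    pd_comm hU (hF (imIₗ _ _ _)) hx l m,
    pd_comm hU (hF (imJₗ _ _ _)) hx l m,
    pd_comm hU (hF (imKₗ _ _ _)) hx l m]

end SQDerivative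

def dirac {n : ℕ} (A : Fin n → SQ →ₗ[ℝ] SQ) (F : (Fin n → ℝ) → SQ) (x : Fin n → ℝ) : SQ :=
  ∑ l, A l (pdQ l F x)

section Dirac

variable {n : ℕ} {U : Set (Fin n → ℝ)} {F G : (Fin n → ℝ) → SQ} {x : Fin n → ℝ}

theorem dirac_dirac (hU : IsOpen U)
    (hF : ∀ φ : SQ →ₗ[ℝ] ℝ, ContDiffOn ℝ 2 (fun y => φ (F y)) U) (hx : x ∈ U)
    (A B : Fin n → SQ →ₗ[ℝ] SQ) :
    dirac B (dirac A F) x = ∑ m, ∑ l, B m (A l (pdQ m (pdQ l F) x)) := by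
  refine Finset.sum_congr rfl fun m _ => ?_
  change B m (pdQ m (fun y => ∑ l, A l (pdQ l F y)) x) = _
  rw [pdQ_sum_linearMap _ A (H := fun l => pdQ l F) (sqDifferentiableAt_pdQ hU hF hx), map_sum]

theorem dirac_eq_zero_of_eqOn_zero (hU : IsOpen U) (hG : ∀ y ∈ U, G y = 0) (hx : x ∈ U)
    (A : Fin n → SQ →ₗ[ℝ] SQ) : dirac A G x = 0 := by
  simp [dirac, pdQ_eq_zero_of_eqOn_zero hU hG hx]

end Dirac

theorem dbar_eq_dirac :
    dbar = dirac ![LinearMap.id, .mulLeft ℝ qi, .mulLeft ℝ (-qj), .mulLeft ℝ (-qk)] := by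
  ext F x : 2
  simp [dbar, dirac, Fin.sum_univ_four, sub_eq_add_neg]

theorem del_eq_dirac :
    del = dirac ![LinearMap.id, .mulLeft ℝ (-qi), .mulLeft ℝ qj, .mulLeft ℝ qk] := by
  ext F x : 2
  simp [del, dirac, Fin.sum_univ_four, sub_eq_add_neg]

theorem dbarR_eq_dirac :
    dbarR = dirac ![LinearMap.id, .mulRight ℝ qi, .mulRight ℝ (-qj), .mulRight ℝ (-qk)] := by
  ext F x : 2
  simp [dbarR, dirac, Fin.sum_univ_four, sub_eq_add_neg]

theorem delR_eq_dirac :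
    delR = dirac ![LinearMap.id, .mulRight ℝ (-qi), .mulRight ℝ qj, .mulRight ℝ qk] := by
  ext F x : 2
  simp [delR, dirac, Fin.sum_univ_four, sub_eq_add_neg]

def boxQ (F : (Fin 4 → ℝ) → SQ) (x : Fin 4 → ℝ) : SQ :=
  pdQ 0 (pdQ 0 F) x + pdQ 1 (pdQ 1 F) x - pdQ 2 (pdQ 2 F) x - pdQ 3 (pdQ 3 F) x

theorem boxQ_eq_zero_iff {F : (Fin 4 → ℝ) → SQ} {x : Fin 4 → ℝ} :
    boxQ F x = 0 ↔
      box (fun y => (F y).re) x = 0 ∧ box (fun y => (F y).imI) x = 0 ∧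
      box (fun y => (F y).imJ) x = 0 ∧ box (fun y => (F y).imK) x = 0 :=
  QuaternionAlgebra.ext_iff

section Factorization

variable {U : Set (Fin 4 → ℝ)} {F : (Fin 4 → ℝ) → SQ} {x : Fin 4 → ℝ}

theorem del_dbar_eq_boxQ (hU : IsOpen U)
    (hF : ∀ φ : SQ →ₗ[ℝ] ℝ, ContDiffOn ℝ 2 (fun y => φ (F y)) U) (hx : x ∈ U) :
    del (dbar F) x = boxQ F x := by
  have hS := pdQ_comm hU hF hx
  rw [del_eq_dirac, dbar_eq_dirac, dirac_dirac hU hF hx]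
  simp only [Fin.sum_univ_four, Matrix.cons_val_zero, Matrix.cons_val_one, Matrix.cons_val_two,
    Matrix.cons_val_three, LinearMap.id_apply, LinearMap.mulLeft_apply]
  rw [hS 1 0, hS 2 0, hS 3 0, hS 2 1, hS 3 1, hS 3 2]
  ext <;> simp [boxQ, qi, qj, qk] <;> ring

theorem dbar_del_eq_boxQ (hU : IsOpen U)
    (hF : ∀ φ : SQ →ₗ[ℝ] ℝ, ContDiffOn ℝ 2 (fun y => φ (F y)) U) (hx : x ∈ U) :
    dbar (del F) x = boxQ F x := by
  have hS := pdQ_comm hU hF hx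
  rw [dbar_eq_dirac, del_eq_dirac, dirac_dirac hU hF hx]
  simp only [Fin.sum_univ_four, Matrix.cons_val_zero, Matrix.cons_val_one, Matrix.cons_val_two,
    Matrix.cons_val_three, LinearMap.id_apply, LinearMap.mulLeft_apply]
  rw [hS 1 0, hS 2 0, hS 3 0, hS 2 1, hS 3 1, hS 3 2]
  ext <;> simp [boxQ, qi, qj, qk] <;> ring

theorem delR_dbarR_eq_boxQ (hU : IsOpen U)
    (hF : ∀ φ : SQ →ₗ[ℝ] ℝ, ContDiffOn ℝ 2 (fun y => φ (F y)) U) (hx : x ∈ U) :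
    delR (dbarR F) x = boxQ F x := by
  have hS := pdQ_comm hU hF hx
  rw [delR_eq_dirac, dbarR_eq_dirac, dirac_dirac hU hF hx]
  simp only [Fin.sum_univ_four, Matrix.cons_val_zero, Matrix.cons_val_one, Matrix.cons_val_two,
    Matrix.cons_val_three, LinearMap.id_apply, LinearMap.mulRight_apply]
  rw [hS 1 0, hS 2 0, hS 3 0, hS 2 1, hS 3 1, hS 3 2]
  ext <;> simp [boxQ, qi, qj, qk] <;> ring

theorem dbarR_delR_eq_boxQ (hU : IsOpen U)
    (hF : ∀ φ : SQ →ₗ[ℝ] ℝ, ContDiffOn ℝ 2 (fun y => φ (F y)) U) (hx : x ∈ U) :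
    dbarR (delR F) x = boxQ F x := by
  have hS := pdQ_comm hU hF hx
  rw [dbarR_eq_dirac, delR_eq_dirac, dirac_dirac hU hF hx]
  simp only [Fin.sum_univ_four, Matrix.cons_val_zero, Matrix.cons_val_one, Matrix.cons_val_two,
    Matrix.cons_val_three, LinearMap.id_apply, LinearMap.mulRight_apply]
  rw [hS 1 0, hS 2 0, hS 3 0, hS 2 1, hS 3 1, hS 3 2]
  ext <;> simp [boxQ, qi, qj, qk] <;> ring

end Factorization

theorem contDiffOn_linearMap_comp {n : ℕ} {U : Set (Fin n → ℝ)} {F : (Fin n → ℝ) → SQ}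
    (h₀ : ContDiffOn ℝ 2 (fun x => (F x).re) U) (h₁ : ContDiffOn ℝ 2 (fun x => (F x).imI) U)
    (h₂ : ContDiffOn ℝ 2 (fun x => (F x).imJ) U) (h₃ : ContDiffOn ℝ 2 (fun x => (F x).imK) U)
    (φ : SQ →ₗ[ℝ] ℝ) : ContDiffOn ℝ 2 (fun y => φ (F y)) U := by
  simp only [linearMap_apply_eq_components φ (F _)]
  fun_prop

/-- if `F` has C² components on an open set `U` and satisfies one of
`∂̄F = 0`, `F∂̄ = 0`, `∂F = 0`, `F∂ = 0` on `U`, then each real component of `F`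
satisfies John's equation `Δ₍₂,₂₎u = 0` on `U`. -/
theorem regular_components_ultrahyperbolic (U : Set (Fin 4 → ℝ)) (hU : IsOpen U)
    (F : (Fin 4 → ℝ) → SQ)
    (h₀ : ContDiffOn ℝ 2 (fun x => (F x).re) U)
    (h₁ : ContDiffOn ℝ 2 (fun x => (F x).imI) U)
    (h₂ : ContDiffOn ℝ 2 (fun x => (F x).imJ) U)
    (h₃ : ContDiffOn ℝ 2 (fun x => (F x).imK) U)
    (hreg : (∀ x ∈ U, dbar F x = 0) ∨ (∀ x ∈ U, dbarR F x = 0) ∨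
            (∀ x ∈ U, del F x = 0) ∨ (∀ x ∈ U, delR F x = 0)) :
    ∀ x ∈ U,
      box (fun y => (F y).re) x = 0 ∧ box (fun y => (F y).imI) x = 0 ∧
      box (fun y => (F y).imJ) x = 0 ∧ box (fun y => (F y).imK) x = 0 := by
  intro x hx
  have hF := contDiffOn_linearMap_comp h₀ h₁ h₂ h₃
  rw [← boxQ_eq_zero_iff]
  rcases hreg with h | h | h | h
  · rw [← del_dbar_eq_boxQ hU hF hx, del_eq_dirac]
    exact dirac_eq_zero_of_eqOn_zero hU h hx _
  · rw [← delR_dbarR_eq_boxQ hU hF hx, delR_eq_dirac]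
    exact dirac_eq_zero_of_eqOn_zero hU h hx _
  · rw [← dbar_del_eq_boxQ hU hF hx, dbar_eq_dirac]
    exact dirac_eq_zero_of_eqOn_zero hU h hx _
  · rw [← dbarR_delR_eq_boxQ hU hF hx, dbarR_eq_dirac]
    exact dirac_eq_zero_of_eqOn_zero hU h hx _

end
end

section
/- Let g₁, g₂, g₃, g₄ : ℝ² → ℝ be C¹ and define F : ℝ⁴ → Cl(1,1) by F(x₀,x₁,x₂,x₃) = (g₁(x₀+x₂, x₁+x₃) + g₂(x₀−x₂, x₁−x₃)) + (g₃(x₀−x₂, x₁−x₃) + g₄(x₀+x₂, x₁+x₃))·i + (g₁(x₀+x₂, x₁+x₃) − g₂(x₀−x₂, x₁−x₃))·j + (g₃(x₀−x₂, x₁−x₃) − g₄(x₀+x₂, x₁+x₃))·ij. Then F is left regular, i.e., ∂̄F = 0 at every point of ℝ⁴. -/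
open Filter Topology Quaternion

noncomputable section

/-!
Splitting along the null coordinates, the function is
`Σₖ gₖ(y₀ + sₖ y₂, y₁ + sₖ y₃) • (1 + sₖ j) dₖ` with `sₖ = ±1` and `dₖ ∈ {1, i}`
(note `i - ij = (1 + j) i` and `i + ij = (1 - j) i`). A real function of `(y₀ + s y₂, y₁ + s y₃)`
has `∂₂ = s ∂₀` and `∂₃ = s ∂₁`, so its `∂̄` is `(∂₀ + ∂₁ i)(1 - s j)`, and
`(1 - s j)(1 + s j) = 1 - s² j² = 0` because `j² = 1`.
-/

lemma pd_comp_clm {n : ℕ} {E : Type*} [NormedAddCommGroup E] [NormedSpace ℝ E]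
    (g : E → ℝ) (L : (Fin n → ℝ) →L[ℝ] E) (l : Fin n) (x : Fin n → ℝ)
    (hg : DifferentiableAt ℝ g (L x)) :
    pd l (fun y => g (L y)) x = fderiv ℝ g (L x) (L (Pi.single l 1)) := by
  rw [pd, fderiv_fun_comp x hg L.differentiableAt, L.fderiv]
  rfl

lemma pd_sum_mul_const {n : ℕ} {ι : Type*} [Fintype ι] (f : ι → (Fin n → ℝ) → ℝ) (r : ι → ℝ)
    (l : Fin n) (x : Fin n → ℝ) (hf : ∀ k, DifferentiableAt ℝ (f k) x) :
    pd l (fun y => ∑ k, f k y * r k) x = ∑ k, pd l (f k) x * r k := by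
  simp only [pd]
  rw [fderiv_fun_sum fun k _ => (hf k).mul_const (r k)]
  simp [fderiv_mul_const (hf _), mul_comm]

lemma pd_linearMap_sum_smul {n : ℕ} {ι M : Type*} [Fintype ι] [AddCommGroup M] [Module ℝ M]
    (φ : M →ₗ[ℝ] ℝ) (f : ι → (Fin n → ℝ) → ℝ) (c : ι → M)
    (l : Fin n) (x : Fin n → ℝ) (hf : ∀ k, DifferentiableAt ℝ (f k) x) :
    pd l (fun y => φ (∑ k, f k y • c k)) x = φ (∑ k, pd l (f k) x • c k) := by
  simpa [map_sum] using pd_sum_mul_const f (fun k => φ (c k)) l x hf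

lemma pdQ_sum_smul {n : ℕ} {ι : Type*} [Fintype ι] (f : ι → (Fin n → ℝ) → ℝ) (c : ι → SQ)
    (l : Fin n) (x : Fin n → ℝ) (hf : ∀ k, DifferentiableAt ℝ (f k) x) :
    pdQ l (fun y => ∑ k, f k y • c k) x = ∑ k, pd l (f k) x • c k := by
  ext
  · exact pd_linearMap_sum_smul (QuaternionAlgebra.reₗ _ _ _) f c l x hf
  · exact pd_linearMap_sum_smul (QuaternionAlgebra.imIₗ _ _ _) f c l x hf
  · exact pd_linearMap_sum_smul (QuaternionAlgebra.imJₗ _ _ _) f c l x hf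
  · exact pd_linearMap_sum_smul (QuaternionAlgebra.imKₗ _ _ _) f c l x hf

def dbarSymbol (a₀ a₁ a₂ a₃ : ℝ) : SQ :=
  a₀ • 1 + a₁ • qi - a₂ • qj - a₃ • qk

lemma dbar_sum_smul {ι : Type*} [Fintype ι] (f : ι → (Fin 4 → ℝ) → ℝ) (c : ι → SQ)
    (x : Fin 4 → ℝ) (hf : ∀ k, DifferentiableAt ℝ (f k) x) :
    dbar (fun y => ∑ k, f k y • c k) x =
      ∑ k, dbarSymbol (pd 0 (f k) x) (pd 1 (f k) x) (pd 2 (f k) x) (pd 3 (f k) x) * c k := by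
  simp only [dbar, dbarSymbol, pdQ_sum_smul f c _ x hf, Finset.mul_sum, ← Finset.sum_sub_distrib,
    ← Finset.sum_add_distrib, sub_mul, add_mul, smul_mul_assoc, mul_smul_comm, one_mul]

lemma dbarSymbol_null (a b s : ℝ) :
    dbarSymbol a b (s * a) (s * b) = (a • 1 + b • qi) * (1 - s • qj) := by
  ext <;> simp [dbarSymbol, qi, qj, qk] <;> ring

lemma one_sub_smul_qj_mul_one_add_smul_qj {s : ℝ} (hs : s * s = 1) :
    (1 - s • qj) * (1 + s • qj) = 0 := by
  ext <;> simp [qj, hs]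

def nullCoord (s : ℝ) : (Fin 4 → ℝ) →L[ℝ] ℝ × ℝ :=
  .prod (.proj 0 + s • .proj 2) (.proj 1 + s • .proj 3)

@[simp]
lemma nullCoord_apply (s : ℝ) (y : Fin 4 → ℝ) :
    nullCoord s y = (y 0 + s * y 2, y 1 + s * y 3) :=
  rfl

lemma pd_two_comp_nullCoord (g : ℝ × ℝ → ℝ) (s : ℝ) (x : Fin 4 → ℝ)
    (hg : DifferentiableAt ℝ g (nullCoord s x)) :
    pd 2 (fun y => g (nullCoord s y)) x = s * pd 0 (fun y => g (nullCoord s y)) x := by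
  rw [pd_comp_clm _ _ _ _ hg, pd_comp_clm _ _ _ _ hg, ← smul_eq_mul, ← map_smul]
  congr 1
  simp

lemma pd_three_comp_nullCoord (g : ℝ × ℝ → ℝ) (s : ℝ) (x : Fin 4 → ℝ)
    (hg : DifferentiableAt ℝ g (nullCoord s x)) :
    pd 3 (fun y => g (nullCoord s y)) x = s * pd 1 (fun y => g (nullCoord s y)) x := by
  rw [pd_comp_clm _ _ _ _ hg, pd_comp_clm _ _ _ _ hg, ← smul_eq_mul, ← map_smul]
  congr 1
  simp

lemma dbar_sum_nullCoord_eq_zero {ι : Type*} [Fintype ι] (g : ι → ℝ × ℝ → ℝ) (s : ι → ℝ)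
    (d : ι → SQ) (hg : ∀ k, Differentiable ℝ (g k)) (hs : ∀ k, s k * s k = 1)
    (x : Fin 4 → ℝ) :
    dbar (fun y => ∑ k, g k (nullCoord (s k) y) • ((1 + s k • qj) * d k)) x = 0 := by
  rw [dbar_sum_smul (fun k y => g k (nullCoord (s k) y)) _ x
    fun k => (hg k).differentiableAt.comp x (nullCoord (s k)).differentiableAt]
  refine Finset.sum_eq_zero fun k _ => ?_
  rw [pd_two_comp_nullCoord _ _ _ (hg k _), pd_three_comp_nullCoord _ _ _ (hg k _),
    dbarSymbol_null, mul_assoc, ← mul_assoc (1 - _), one_sub_smul_qj_mul_one_add_smul_qj (hs k),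
    zero_mul, mul_zero]

/-- every function of the special form built from C¹ functions
`g₁, g₂, g₃, g₄ : ℝ² → ℝ` of the null coordinates is left regular on `ℝ⁴`. -/
theorem special_form_leftRegular (g₁ g₂ g₃ g₄ : ℝ × ℝ → ℝ)
    (hg₁ : ContDiff ℝ 1 g₁) (hg₂ : ContDiff ℝ 1 g₂)
    (hg₃ : ContDiff ℝ 1 g₃) (hg₄ : ContDiff ℝ 1 g₄) :
    ∀ x : Fin 4 → ℝ,
      dbar (fun y =>
        (⟨g₁ (y 0 + y 2, y 1 + y 3) + g₂ (y 0 - y 2, y 1 - y 3),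
          g₃ (y 0 - y 2, y 1 - y 3) + g₄ (y 0 + y 2, y 1 + y 3),
          g₁ (y 0 + y 2, y 1 + y 3) - g₂ (y 0 - y 2, y 1 - y 3),
          g₃ (y 0 - y 2, y 1 - y 3) - g₄ (y 0 + y 2, y 1 + y 3)⟩ : SQ)) x = 0 := by
  intro x
  let g : Fin 4 → ℝ × ℝ → ℝ := ![g₁, g₄, g₂, g₃]
  let s : Fin 4 → ℝ := ![1, 1, -1, -1]
  let d : Fin 4 → SQ := ![1, qi, 1, qi]
  have hF : (fun y : Fin 4 → ℝ =>
        (⟨g₁ (y 0 + y 2, y 1 + y 3) + g₂ (y 0 - y 2, y 1 - y 3),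
          g₃ (y 0 - y 2, y 1 - y 3) + g₄ (y 0 + y 2, y 1 + y 3),
          g₁ (y 0 + y 2, y 1 + y 3) - g₂ (y 0 - y 2, y 1 - y 3),
          g₃ (y 0 - y 2, y 1 - y 3) - g₄ (y 0 + y 2, y 1 + y 3)⟩ : SQ)) =
      fun y => ∑ k, g k (nullCoord (s k) y) • ((1 + s k • qj) * d k) := by
    funext y
    ext <;> simp [Fin.sum_univ_four, g, s, d, qi, qj, ← sub_eq_add_neg] <;> ring
  have hg : ∀ k, Differentiable ℝ (g k) := by
    intro k
    fin_cases k
    exacts [hg₁.differentiable one_ne_zero, hg₄.differentiable one_ne_zero,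
      hg₂.differentiable one_ne_zero, hg₃.differentiable one_ne_zero]
  have hs : ∀ k, s k * s k = 1 := by
    intro k
    fin_cases k <;> simp [s]
  rw [hF]
  exact dbar_sum_nullCoord_eq_zero g s d hg hs x

end
end

section
/- There do not exist functions g₁, g₂, g₃, g₄ : ℝ² → ℝ such that for all (x₀,x₁,x₂,x₃) ∈ ℝ⁴ the function f(x₀,x₁,x₂,x₃) = x₁x₂x₃ − (x₀x₂x₃)·i + (x₀x₁x₃)·j + (x₀x₁x₂)·ij equals (g₁(x₀+x₂, x₁+x₃) + g₂(x₀−x₂, x₁−x₃)) + (g₃(x₀−x₂, x₁−x₃) + g₄(x₀+x₂, x₁+x₃))·i + (g₁(x₀+x₂, x₁+x₃) − g₂(x₀−x₂, x₁−x₃))·j + (g₃(x₀−x₂, x₁−x₃) − g₄(x₀+x₂, x₁+x₃))·ij. Hence not every left regular function on ℝ⁴ has this form. -/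
open Filter Topology Quaternion

noncomputable section

/-- the left regular function
`f = x₁x₂x₃ - (x₀x₂x₃)i + (x₀x₁x₃)j + (x₀x₁x₂)ij` is not of the special form of
Theorem `oneclass`. -/
theorem counterexample_not_special_form :
    ¬ ∃ g₁ g₂ g₃ g₄ : ℝ × ℝ → ℝ, ∀ x : Fin 4 → ℝ,
      (⟨x 1 * x 2 * x 3, -(x 0 * x 2 * x 3), x 0 * x 1 * x 3, x 0 * x 1 * x 2⟩ : SQ) =
        (⟨g₁ (x 0 + x 2, x 1 + x 3) + g₂ (x 0 - x 2, x 1 - x 3),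
          g₃ (x 0 - x 2, x 1 - x 3) + g₄ (x 0 + x 2, x 1 + x 3),
          g₁ (x 0 + x 2, x 1 + x 3) - g₂ (x 0 - x 2, x 1 - x 3),
          g₃ (x 0 - x 2, x 1 - x 3) - g₄ (x 0 + x 2, x 1 + x 3)⟩ : SQ) := by
  rintro ⟨g₁, g₂, g₃, g₄, h⟩
  -- The `1 + j` component of the special form is `2 g₁(x₀ + x₂, x₁ + x₃)`, that of `f` is
  -- `x₁x₃(x₀ + x₂)`; the points `(1,0,0,0)` and `(1,1,0,-1)` agree in `x₀ + x₂` and `x₁ + x₃`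
  -- but not in `x₁x₃`.
  have re_add_imJ : ∀ a b c d : ℝ, b * d * (a + c) = 2 * g₁ (a + c, b + d) := by
    intro a b c d
    have := congrArg (fun z : SQ => z.re + z.imJ) (h ![a, b, c, d])
    simp only [Matrix.cons_val] at this
    linarith
  have h₁ := re_add_imJ 1 0 0 0
  have h₂ := re_add_imJ 1 1 0 (-1)
  norm_num at h₁ h₂
  linarith

end
end
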